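/- For j = 1, …, m define d_j = (β_j − α_j)P_j/π and b_j = [(β_j − α_j)P_j/(4π α_j)]^{1/2} (here 4π is the area of the 2-dimensional unit sphere), and then set σ_j = d_j/(4 b_j²) and ρ_j = 4π b_j². Then for every j = 1, …, m one has σ_j = α_j and ρ_j = (β_j − α_j)P_j/α_j, and for every k = 1, …, m one has 1 + ∑_{j=1}^m σ_j ρ_j/(σ_j − β_k) = 0; that is, each β_k is a root of the function 𝓕(λ) = 1 + ∑_{j=1}^m σ_j ρ_j/(σ_j − λ). -/

import Mathlib

/-!
Let `f` and `g` be the monic polynomials with roots `β_i` and `α_i`. Since `f - g` has degree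
`< m`, Lagrange interpolation at the nodes `α_j` gives the partial fraction expansion
`f(λ)/g(λ) = 1 + ∑_j (α_j - β_j) P_j / (λ - α_j)`, which vanishes at `λ = β_k`. Interlacing
makes every `P_j` positive, so `b_j² = (β_j - α_j) P_j / (4π α_j)` and `σ_j = α_j`.
-/

open Real

namespace Lagrange

open Polynomial Finset

variable {F ι : Type*} [Field F] [DecidableEq ι] {s : Finset ι} {a : ι → F}

theorem eval_nodal_div_eval_nodal (b : ι → F) (ha : Set.InjOn a s) {x : F}
    (hx : ∀ i ∈ s, x ≠ a i) :
    (nodal s b).eval x / (nodal s a).eval x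
      = 1 + ∑ i ∈ s, nodalWeight s a i * (x - a i)⁻¹ * (nodal s b).eval (a i) := by
  have hdeg : (nodal s b - nodal s a).degree < #s := by
    rw [← degree_nodal (s := s) (v := b)]
    exact degree_sub_lt_left (by rw [degree_nodal, degree_nodal]) nodal_ne_zero
      ((nodal_monic (s := s) (v := b)).leadingCoeff.trans nodal_monic.leadingCoeff.symm)
  have hnodes : ∀ i ∈ s, (nodal s b - nodal s a).eval (a i) = (nodal s b).eval (a i) :=
    fun i hi => by rw [eval_sub, eval_nodal_at_node hi, sub_zero]
  have hinterp := congrArg (eval x) (eq_interpolate_of_eval_eq _ ha hdeg hnodes)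
  rw [eval_sub, eval_interpolate_not_at_node _ hx] at hinterp
  rw [div_eq_iff (eval_nodal_not_at_node hx)]
  linear_combination hinterp

theorem one_add_sum_nodalWeight_mul_eq_zero (b : ι → F) (ha : Set.InjOn a s) {k : ι}
    (hk : k ∈ s) (hb : ∀ i ∈ s, b k ≠ a i) :
    1 + ∑ i ∈ s, nodalWeight s a i * (b k - a i)⁻¹ * (nodal s b).eval (a i) = 0 := by
  rw [← eval_nodal_div_eval_nodal b ha hb, eval_nodal_at_node hk, zero_div]

theorem nodalWeight_mul_eval_nodal (b : ι → F) {j : ι} (hj : j ∈ s) :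
    nodalWeight s a j * (nodal s b).eval (a j)
      = (a j - b j) * ∏ i ∈ s.erase j, (b i - a j) / (a i - a j) := by
  rw [nodalWeight, eval_nodal, ← mul_prod_erase _ _ hj, mul_left_comm, ← prod_mul_distrib]
  congr 1
  refine prod_congr rfl fun i _ => ?_
  rw [← neg_div_neg_eq, neg_sub, neg_sub, div_eq_inv_mul]

end Lagrange

namespace Interlacing

open Finset

variable {m : ℕ} {α β : ℕ → ℝ} (hαβ : ∀ j, j < m → α j < β j)
  (hβα : ∀ j, j + 1 < m → β j < α (j + 1))
include hαβ hβα

theorem beta_lt_alpha_of_lt {i j : ℕ} (hij : i < j) (hj : j < m) : β i < α j := by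
  induction j, hij using Nat.le_induction with
  | base => exact hβα i hj
  | succ n hin ih => exact (ih (by omega)).trans ((hαβ n (by omega)).trans (hβα n hj))

theorem strictMonoOn_alpha : StrictMonoOn α (Set.Iio m) := fun i hi _ hj hij =>
  (hαβ i hi).trans (beta_lt_alpha_of_lt hαβ hβα hij hj)

theorem beta_ne_alpha {j k : ℕ} (hj : j < m) (hk : k < m) : β k ≠ α j := by
  rcases lt_or_ge k j with hkj | hjk
  · exact (beta_lt_alpha_of_lt hαβ hβα hkj hj).ne
  · exact ((strictMonoOn_alpha hαβ hβα).monotoneOn hj hk hjk).trans_lt (hαβ k hk) |>.ne'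

theorem prod_sub_div_sub_pos {j : ℕ} (hj : j < m) :
    0 < ∏ i ∈ (range m).erase j, (β i - α j) / (α i - α j) := by
  refine prod_pos fun i hi => ?_
  obtain ⟨hij, hi⟩ : i ≠ j ∧ i < m := by simpa only [mem_erase, mem_range] using hi
  rcases hij.lt_or_gt with hij | hji
  · exact div_pos_of_neg_of_neg (sub_neg.mpr (beta_lt_alpha_of_lt hαβ hβα hij hj))
      (sub_neg.mpr (strictMonoOn_alpha hαβ hβα hi hj hij))
  · exact div_pos (sub_pos.mpr ((strictMonoOn_alpha hαβ hβα hj hi hji).trans (hαβ i hi)))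
      (sub_pos.mpr (strictMonoOn_alpha hαβ hβα hj hi hji))

end Interlacing

theorem div_pi_div_four_mul_sqrt_sq {q a : ℝ} (hq : 0 < q) (ha : 0 < a) :
    q / π / (4 * √(q / (4 * π * a)) ^ 2) = a := by
  rw [sq_sqrt (by positivity)]
  field_simp

theorem four_mul_pi_mul_sqrt_sq {q a : ℝ} (hq : 0 ≤ q) (ha : 0 < a) :
    4 * π * √(q / (4 * π * a)) ^ 2 = q / a := by
  rw [sq_sqrt (by positivity)]
  field_simp

theorem gaps_parameters_choice_dim_two_general
    (m : ℕ)
    (α β : ℕ → ℝ)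
    (hα0 : 0 < α 0)
    (hαβ : ∀ j, j < m → α j < β j)
    (hβα : ∀ j, j + 1 < m → β j < α (j + 1))
    (P d b σ ρ : ℕ → ℝ)
    (hP : ∀ j, P j = ∏ i ∈ (Finset.range m).erase j, (β i - α j) / (α i - α j))
    (hd : ∀ j, d j = (β j - α j) * P j / π)
    (hb : ∀ j, b j = Real.sqrt ((β j - α j) * P j / (4 * π * α j)))
    (hσ : ∀ j, σ j = d j / (4 * b j ^ 2))
    (hρ : ∀ j, ρ j = 4 * π * b j ^ 2) :
    (∀ j, j < m → σ j = α j ∧ ρ j = (β j - α j) * P j / α j) ∧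
    (∀ k, k < m → 1 + ∑ j ∈ Finset.range m, σ j * ρ j / (σ j - β k) = 0) := by
  have hαpos : ∀ j, j < m → 0 < α j := fun j hj =>
    hα0.trans_le ((Interlacing.strictMonoOn_alpha hαβ hβα).monotoneOn
      ((Nat.zero_le j).trans_lt hj) hj (Nat.zero_le j))
  have hq : ∀ j, j < m → 0 < (β j - α j) * P j := fun j hj =>
    mul_pos (sub_pos.mpr (hαβ j hj)) (hP j ▸ Interlacing.prod_sub_div_sub_pos hαβ hβα hj)
  have hσρ : ∀ j, j < m → σ j = α j ∧ ρ j = (β j - α j) * P j / α j := fun j hj =>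
    ⟨by rw [hσ, hd, hb, div_pi_div_four_mul_sqrt_sq (hq j hj) (hαpos j hj)],
      by rw [hρ, hb, four_mul_pi_mul_sqrt_sq (hq j hj).le (hαpos j hj)]⟩
  refine ⟨hσρ, fun k hk => ?_⟩
  rw [← Lagrange.one_add_sum_nodalWeight_mul_eq_zero β
    ((Interlacing.strictMonoOn_alpha hαβ hβα).injOn.mono (Finset.coe_range m).subset)
    (Finset.mem_range.mpr hk)
    fun j hj => Interlacing.beta_ne_alpha hαβ hβα (Finset.mem_range.mp hj) hk]
  refine congrArg (1 + ·) (Finset.sum_congr rfl fun j hjm => ?_)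
  have hj := Finset.mem_range.mp hjm
  rw [mul_right_comm, Lagrange.nodalWeight_mul_eval_nodal β hjm, ← hP, (hσρ j hj).1,
    (hσρ j hj).2, mul_div_cancel₀ _ (hαpos j hj).ne', div_eq_mul_inv, ← neg_sub (β k), inv_neg]
  ring

theorem gaps_parameters_choice_dim_two
    (m : ℕ) (hm : 1 ≤ m)
    (α β : ℕ → ℝ)
    (hα0 : 0 < α 0)
    (hαβ : ∀ j, j < m → α j < β j)
    (hβα : ∀ j, j + 1 < m → β j < α (j + 1))
    (P d b σ ρ : ℕ → ℝ)
    (hP : ∀ j, P j = ∏ i ∈ (Finset.range m).erase j, (β i - α j) / (α i - α j))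
    (hd : ∀ j, d j = (β j - α j) * P j / π)
    (hb : ∀ j, b j = Real.sqrt ((β j - α j) * P j / (4 * π * α j)))
    (hσ : ∀ j, σ j = d j / (4 * b j ^ 2))
    (hρ : ∀ j, ρ j = 4 * π * b j ^ 2) :
    (∀ j, j < m → σ j = α j ∧ ρ j = (β j - α j) * P j / α j) ∧
    (∀ k, k < m → 1 + ∑ j ∈ Finset.range m, σ j * ρ j / (σ j - β k) = 0) :=
  gaps_parameters_choice_dim_two_general m α β hα0 hαβ hβα P d b σ ρ hP hd hb hσ hρ
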